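/- arXiv:0805.2084 — 3 statements merged into one kernel-verified Lean document; each statement's English description precedes it below -/
import Mathlib

section
/- For 0 < d < 1/2 and t ≥ 0, the function s ↦ (1/Γ(d+1))·((t−s)₊^d − (−s)₊^d) on ℝ belongs to L²(ℝ). -/
/-!
Reflecting `s ↦ -s` turns the kernel into `u ↦ (u + t)₊^d - u₊^d`. This vanishes for `u ≤ -t`,
is continuous, hence bounded, on `[-t, 1]`, and by concavity of `x ↦ x^d` it is at most
`d t u^(d-1)` for `u > 0`; the square of that tail bound is integrable at infinity exactly when
`2d - 2 < -1`, i.e. `d < 1/2`.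
-/

open MeasureTheory Set

theorem Real.rpow_add_sub_rpow_le_mul {d u t : ℝ} (hd0 : 0 ≤ d) (hd1 : d ≤ 1) (hu : 0 < u)
    (ht : 0 ≤ t) : (u + t) ^ d - u ^ d ≤ d * t * u ^ (d - 1) := by
  have hbernoulli : (1 + t / u) ^ d ≤ 1 + d * (t / u) :=
    rpow_one_add_le_one_add_mul_self (by linarith [div_nonneg ht hu.le]) hd0 hd1
  calc (u + t) ^ d - u ^ d = u ^ d * (1 + t / u) ^ d - u ^ d := by
        rw [← Real.mul_rpow hu.le (by positivity), mul_one_add, mul_div_cancel₀ _ hu.ne']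
    _ ≤ u ^ d * (1 + d * (t / u)) - u ^ d := by gcongr
    _ = d * t * (u ^ d / u) := by ring
    _ = d * t * u ^ (d - 1) := by rw [Real.rpow_sub_one hu.ne']

noncomputable def posPartRpowIncrement (d t u : ℝ) : ℝ := max (u + t) 0 ^ d - max u 0 ^ d

namespace posPartRpowIncrement

variable {d t : ℝ}

theorem continuous (hd : 0 ≤ d) : Continuous (posPartRpowIncrement d t) := by
  unfold posPartRpowIncrement
  fun_prop (disch := exact hd)

theorem eq_zero_of_le_neg (hd : d ≠ 0) (ht : 0 ≤ t) {u : ℝ} (hu : u ≤ -t) :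
    posPartRpowIncrement d t u = 0 := by
  rw [posPartRpowIncrement, max_eq_right (by linarith), max_eq_right (by linarith),
    Real.zero_rpow hd, sub_self]

theorem abs_le_of_pos (hd0 : 0 ≤ d) (hd1 : d ≤ 1) (ht : 0 ≤ t) {u : ℝ} (hu : 0 < u) :
    |posPartRpowIncrement d t u| ≤ d * t * u ^ (d - 1) := by
  rw [posPartRpowIncrement, max_eq_left (by linarith), max_eq_left hu.le,
    abs_of_nonneg (sub_nonneg.2 (Real.rpow_le_rpow hu.le (by linarith) hd0))]
  exact Real.rpow_add_sub_rpow_le_mul hd0 hd1 hu ht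

theorem integrable_sq (hd0 : 0 < d) (hd : d < 1 / 2) (ht : 0 ≤ t) :
    Integrable (fun u => posPartRpowIncrement d t u ^ 2) := by
  have hcont : Continuous fun u => posPartRpowIncrement d t u ^ 2 :=
    (continuous hd0.le).pow 2
  have hleft : IntegrableOn (fun u => posPartRpowIncrement d t u ^ 2) (Iio (-t)) :=
    integrableOn_zero.congr_fun (fun u hu => by
      simp [eq_zero_of_le_neg hd0.ne' ht (le_of_lt hu)]) measurableSet_Iio
  have htail : IntegrableOn (fun u => posPartRpowIncrement d t u ^ 2) (Ioi 1) := by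
    refine Integrable.mono' ((integrableOn_Ioi_rpow_of_lt (a := 2 * d - 2) (by linarith)
      one_pos).const_mul ((d * t) ^ 2)) hcont.aestronglyMeasurable.restrict ?_
    filter_upwards [ae_restrict_mem measurableSet_Ioi] with u (hu : 1 < u)
    have hu0 : 0 < u := one_pos.trans hu
    calc ‖posPartRpowIncrement d t u ^ 2‖ = |posPartRpowIncrement d t u| ^ 2 := by simp
      _ ≤ (d * t * u ^ (d - 1)) ^ 2 := by
          gcongr; exact abs_le_of_pos hd0.le (by linarith) ht hu0
      _ = (d * t) ^ 2 * u ^ (2 * d - 2) := by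
          rw [mul_pow, ← Real.rpow_mul_natCast hu0.le]; ring_nf
  rw [← integrableOn_univ, ← Iic_union_Ioi (a := (1 : ℝ)),
    ← Iio_union_Icc_eq_Iic (show -t ≤ 1 by linarith)]
  exact (hleft.union hcont.integrableOn_Icc).union htail

end posPartRpowIncrement

/-- The kernel `f_t(s) = (1/Γ(d+1))((t-s)₊^d - (-s)₊^d)` of the fractional Lévy
process belongs to `L²(ℝ)` for `0 < d < 1/2` and `t ≥ 0`. -/
theorem fractional_kernel_memL2 (d t : ℝ) (hd0 : 0 < d) (hd : d < 1/2) (ht : 0 ≤ t) :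
    MemLp (fun s : ℝ =>
      (1 / Real.Gamma (d + 1)) * ((max (t - s) 0) ^ d - (max (-s) 0) ^ d)) 2 volume := by
  have hreflect (s : ℝ) :
      (max (t - s) 0) ^ d - (max (-s) 0) ^ d = posPartRpowIncrement d t (-s) := by
    rw [posPartRpowIncrement, neg_add_eq_sub]
  have hmeas : AEStronglyMeasurable (fun s => posPartRpowIncrement d t (-s)) volume :=
    ((posPartRpowIncrement.continuous hd0.le).comp continuous_neg).aestronglyMeasurable
  have hL2 : MemLp (fun s => posPartRpowIncrement d t (-s)) 2 volume :=
    (memLp_two_iff_integrable_sq hmeas).2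
      (posPartRpowIncrement.integrable_sq hd0 hd ht).comp_neg
  simpa only [hreflect] using hL2.const_mul (1 / Real.Gamma (d + 1))
end

section
/- Under hypotheses (H1)–(H4) on the kernel f, the jump of the convoluted Lévy process at time t satisfies ΔM(t) = f(t,t)·ΔL(t); in particular, if f(t,t) = 0 for all t ∈ [a,b], then M has continuous paths on [a,b]. -/
open MeasureTheory Set Filter Topology intervalIntegral



lemma aux_cadlag_bounded (L Lminus : ℝ → ℝ)
    (hLr : ∀ t : ℝ, ContinuousWithinAt L (Set.Ici t) t)
    (hLl : ∀ t : ℝ, Filter.Tendsto L (nhdsWithin t (Set.Iio t)) (nhds (Lminus t)))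
    (a b : ℝ) :
    ∃ K : ℝ, 0 ≤ K ∧ ∀ s ∈ Set.Icc a b, |L s| ≤ K := by
  have hcov : ∀ x : ℝ, {s | |L s| ≤ max |L x| |Lminus x| + 1} ∈ 𝓝 x := by
    intro x
    have h1 : {y : ℝ | |y| < |L x| + 1} ∈ 𝓝 (L x) :=
      (isOpen_lt continuous_abs continuous_const).mem_nhds (by simp)
    have h2 : {y : ℝ | |y| < |Lminus x| + 1} ∈ 𝓝 (Lminus x) :=
      (isOpen_lt continuous_abs continuous_const).mem_nhds (by simp)
    have m1 : {s | |L s| ≤ max |L x| |Lminus x| + 1} ∈ 𝓝[Set.Ici x] x := by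
      filter_upwards [hLr x h1] with s hs
      have : |L s| < |L x| + 1 := hs
      have := le_max_left |L x| |Lminus x|
      linarith
    have m2 : {s | |L s| ≤ max |L x| |Lminus x| + 1} ∈ 𝓝[Set.Iio x] x := by
      filter_upwards [hLl x h2] with s hs
      have : |L s| < |Lminus x| + 1 := hs
      have := le_max_right |L x| |Lminus x|
      linarith
    rw [← nhdsLT_sup_nhdsGE x]
    exact Filter.mem_sup.2 ⟨m2, m1⟩
  obtain ⟨t, -, ht⟩ := (isCompact_Icc (a := a) (b := b)).elim_nhds_subcover
    (fun x => {s | |L s| ≤ max |L x| |Lminus x| + 1}) (fun x _ => hcov x)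
  refine ⟨∑ x ∈ t, |max |L x| |Lminus x| + 1|, Finset.sum_nonneg fun i _ => abs_nonneg _, ?_⟩
  intro s hs
  obtain ⟨x, hxt, hx⟩ := Set.mem_iUnion₂.1 (ht hs)
  calc |L s| ≤ max |L x| |Lminus x| + 1 := hx
    _ ≤ |max |L x| |Lminus x| + 1| := le_abs_self _
    _ ≤ ∑ x ∈ t, |max |L x| |Lminus x| + 1| :=
        Finset.single_le_sum (f := fun x => |max |L x| |Lminus x| + 1|) (fun i _ => abs_nonneg _) hxt


lemma aux_C1_approx (a b : ℝ) (hab : a < b) (L : ℝ → ℝ)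
    (hLint : IntegrableOn L (Set.Ioc a b)) :
    ∀ ε > 0, ∃ g g' : ℝ → ℝ, Continuous g ∧ Continuous g' ∧
      (∀ x, HasDerivAt g (g' x) x) ∧
      (∫ s in Set.Ioc a b, |L s - g s|) ≤ ε := by
  intro ε hε
  set L1 := (Set.Ioc a b).indicator L with hL1def
  have hL1 : Integrable L1 := hLint.integrable_indicator measurableSet_Ioc
  obtain ⟨g₀, hg₀supp, hg₀near, hg₀cont, hg₀int⟩ :=
    hL1.exists_hasCompactSupport_integral_sub_le (half_pos hε)
  have hg₀uc : UniformContinuous g₀ :=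
    hg₀supp.uniformContinuous_of_continuous hg₀cont
  set ε₂ : ℝ := ε / (2 * (b - a)) with hε₂def
  have hε₂ : 0 < ε₂ := div_pos hε (by linarith)
  obtain ⟨δ, hδ, hδ'⟩ := Metric.uniformContinuous_iff.1 hg₀uc ε₂ hε₂
  set c : ℝ := δ / 2 with hcdef
  have hc : 0 < c := half_pos hδ
  set G : ℝ → ℝ := fun x => ∫ τ in (0:ℝ)..x, g₀ τ with hGdef
  have hGd : ∀ x : ℝ, HasDerivAt G (g₀ x) x := fun x =>
    intervalIntegral.integral_hasDerivAt_right (hg₀cont.intervalIntegrable _ _)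
      (hg₀cont.stronglyMeasurableAtFilter _ _) hg₀cont.continuousAt
  have hGcont : Continuous G := continuous_iff_continuousAt.2 fun x => (hGd x).continuousAt
  set g : ℝ → ℝ := fun x => c⁻¹ * (G (x + c) - G x) with hgdef
  set g' : ℝ → ℝ := fun x => c⁻¹ * (g₀ (x + c) - g₀ x) with hg'def
  have hgC : Continuous g := by
    apply continuous_const.mul ((hGcont.comp (continuous_id.add continuous_const)).sub hGcont)
  have hg'C : Continuous g' := by
    apply continuous_const.mul ((hg₀cont.comp (continuous_id.add continuous_const)).sub hg₀cont)
  have hgd : ∀ x, HasDerivAt g (g' x) x := by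
    intro x
    have h1 : HasDerivAt (fun x => G (x + c)) (g₀ (x + c) * 1) x :=
      by have := (hGd (x + c)).comp x ((hasDerivAt_id x).add_const c); exact this
    simpa [hgdef, hg'def, mul_one] using (h1.sub (hGd x)).const_mul c⁻¹
  -- pointwise bound |g x - g₀ x| ≤ ε₂
  have hgnear : ∀ x : ℝ, |g x - g₀ x| ≤ ε₂ := by
    intro x
    have hGint : G (x + c) - G x = ∫ τ in x..(x + c), g₀ τ := by
      rw [hGdef]
      exact intervalIntegral.integral_interval_sub_left
        (hg₀cont.intervalIntegrable _ _) (hg₀cont.intervalIntegrable _ _)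
    have hconst : ∫ τ in x..(x + c), g₀ x = c * g₀ x := by
      simp [intervalIntegral.integral_const, smul_eq_mul]
    have hsub : g x - g₀ x = c⁻¹ * ∫ τ in x..(x + c), (g₀ τ - g₀ x) := by
      rw [intervalIntegral.integral_sub (hg₀cont.intervalIntegrable _ _)
        (intervalIntegrable_const), hconst, hgdef, ← hGint]
      field_simp
    have hbd : |∫ τ in x..(x + c), (g₀ τ - g₀ x)| ≤ ε₂ * |x + c - x| := by
      rw [← Real.norm_eq_abs]
      apply intervalIntegral.norm_integral_le_of_norm_le_const
      intro τ hτ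
      rw [Set.uIoc_of_le (by linarith), Real.norm_eq_abs] at *
      have h1 : dist τ x < δ := by
        rw [Real.dist_eq]
        have := hτ.1
        have := hτ.2
        rw [abs_of_pos (by linarith)]
        rw [hcdef] at *
        linarith
      have := hδ' h1
      rw [Real.dist_eq] at this
      exact this.le
    rw [hsub, abs_mul, abs_inv, abs_of_pos hc]
    rw [show x + c - x = c by ring, abs_of_pos hc] at hbd
    calc c⁻¹ * |∫ τ in x..(x + c), (g₀ τ - g₀ x)| ≤ c⁻¹ * (ε₂ * c) := by
          apply mul_le_mul_of_nonneg_left hbd (by positivity)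
      _ = ε₂ := by field_simp
  refine ⟨g, g', hgC, hg'C, hgd, ?_⟩
  -- integral bound
  have hI1 : (∫ s in Set.Ioc a b, |L s - g₀ s|) ≤ ε / 2 := by
    have heq : (∫ s in Set.Ioc a b, |L s - g₀ s|) = ∫ s in Set.Ioc a b, ‖L1 s - g₀ s‖ := by
      apply setIntegral_congr_fun measurableSet_Ioc
      intro s hs
      simp only [hL1def, Set.indicator_of_mem hs, Real.norm_eq_abs]
    rw [heq]
    refine le_trans (setIntegral_le_integral ((hL1.sub hg₀int).norm) ?_) hg₀near
    filter_upwards with s using norm_nonneg _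
  have hI2 : (∫ s in Set.Ioc a b, |g₀ s - g s|) ≤ ε / 2 := by
    have : (∫ s in Set.Ioc a b, |g₀ s - g s|) ≤ ∫ s in Set.Ioc a b, ε₂ := by
      apply setIntegral_mono_on
      · exact ((hg₀cont.sub hgC).abs).integrableOn_Ioc
      · exact integrableOn_const measure_Ioc_lt_top.ne
      · exact measurableSet_Ioc
      · intro s _
        rw [abs_sub_comm]
        exact hgnear s
    rw [setIntegral_const, Real.volume_real_Ioc_of_le hab.le, smul_eq_mul] at this
    have hba : b - a ≠ 0 := sub_ne_zero.mpr (ne_of_gt hab)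
    calc (∫ s in Set.Ioc a b, |g₀ s - g s|) ≤ (b - a) * ε₂ := this
      _ = ε / 2 := by
          rw [hε₂def, mul_div_assoc', mul_comm 2 (b - a)]
          exact mul_div_mul_left ε 2 hba
  have hint1 : IntegrableOn (fun s => |L s - g₀ s|) (Set.Ioc a b) := by
    exact (hLint.sub hg₀cont.integrableOn_Ioc).abs
  have hint2 : IntegrableOn (fun s => |g₀ s - g s|) (Set.Ioc a b) := by
    exact (hg₀cont.integrableOn_Ioc.sub hgC.integrableOn_Ioc).abs
  have hint3 : IntegrableOn (fun s => |L s - g s|) (Set.Ioc a b) := by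
    exact (hLint.sub hgC.integrableOn_Ioc).abs
  have htri : (∫ s in Set.Ioc a b, |L s - g s|)
      ≤ (∫ s in Set.Ioc a b, |L s - g₀ s|) + ∫ s in Set.Ioc a b, |g₀ s - g s| := by
    rw [← integral_add hint1 hint2]
    apply setIntegral_mono_on hint3 (hint1.add hint2) measurableSet_Ioc
    intro s _
    exact abs_sub_le _ _ _
  linarith

/-- Jumps of the convoluted Lévy process (Lemma 5.1(i)): with
`M(t) = f(t,t)L(t) - f(t,a)L(a) - ∫_a^t L(s) ∂ₛf(t,s) ds` for a càdlàg path `L`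
with left limits `L⁻`, under (H1)–(H4) one has `ΔM(t) = f(t,t) ΔL(t)` (expressed
via left limits), and if `f(t,t) = 0` for all `t ∈ [a,b]` then `M` is continuous
on `[a,b]`. -/
theorem convoluted_jump_and_continuity
    (a b : ℝ) (ha : a ≤ 0) (hb : 0 < b)
    (f : ℝ → ℝ → ℝ)
    (H1 : ∀ t s : ℝ, (t, s) ∉ Set.Icc a b ×ˢ Set.Icc a b → f t s = 0)
    (hvolt : ∀ t s : ℝ, t < s → f t s = 0)
    (H2 : ContinuousOn (fun p : ℝ × ℝ => f p.1 p.2)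
        ((Set.Icc a b ×ˢ Set.Icc a b) \ {p : ℝ × ℝ | p.1 = p.2}))
    (H2b : ∃ C, ∀ t s, |f t s| ≤ C)
    (H3 : ∀ t : ℝ, Filter.Tendsto (fun s => f t s) (nhdsWithin t (Set.Iio t)) (nhds (f t t)))
    (H3c : Continuous fun t => f t t)
    (H4 : ∀ t s : ℝ, t ≠ s →
      DifferentiableAt ℝ (fun u => f t u) s ∧ DifferentiableAt ℝ (fun u => f u s) t)
    (H4b : ∃ C, ∀ t s : ℝ, t ≠ s →
      |deriv (fun u => f t u) s| ≤ C ∧ |deriv (fun u => f u s) t| ≤ C)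
    -- càdlàg path L with left-limit function L⁻
    (L Lminus : ℝ → ℝ) (hLmeas : Measurable L)
    (hLr : ∀ t : ℝ, ContinuousWithinAt L (Set.Ici t) t)
    (hLl : ∀ t : ℝ, Filter.Tendsto L (nhdsWithin t (Set.Iio t)) (nhds (Lminus t)))
    (M : ℝ → ℝ)
    (hM : ∀ t : ℝ, M t
      = f t t * L t - f t a * L a - ∫ s in Set.Ioc a t, L s * deriv (fun u => f t u) s) :
    (∀ t ∈ Set.Ioc a b,
      Filter.Tendsto M (nhdsWithin t (Set.Iio t))
        (nhds (M t - f t t * (L t - Lminus t)))) ∧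
    ((∀ t ∈ Set.Icc a b, f t t = 0) → ContinuousOn M (Set.Icc a b)) := by
  have hab : a ≤ b := le_trans ha hb.le
  have hab' : a < b := lt_of_le_of_lt ha hb
  obtain ⟨K, hK0, hK⟩ := aux_cadlag_bounded L Lminus hLr hLl a b
  obtain ⟨Cb, hCb0, hCb⟩ : ∃ Cb : ℝ, 0 ≤ Cb ∧ ∀ t s, |f t s| ≤ Cb := by
    obtain ⟨C, hC⟩ := H2b
    exact ⟨max C 0, le_max_right _ _, fun t s => (hC t s).trans (le_max_left _ _)⟩
  obtain ⟨Cd, hCd0, hCd⟩ : ∃ Cd : ℝ, 0 ≤ Cd ∧ ∀ t s : ℝ, t ≠ s → |deriv (f t) s| ≤ Cd := by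
    obtain ⟨C, hC⟩ := H4b
    exact ⟨max C 0, le_max_right _ _, fun t s h => ((hC t s h).1).trans (le_max_left _ _)⟩
  -- basic membership helper for the off-diagonal continuity set
  have hS : ∀ {t s : ℝ}, t ∈ Set.Icc a b → s ∈ Set.Icc a b → t ≠ s →
      (t, s) ∈ (Set.Icc a b ×ˢ Set.Icc a b) \ {p : ℝ × ℝ | p.1 = p.2} :=
    fun ht hs hne => ⟨⟨ht, hs⟩, hne⟩
  -- derivative in the second variable is measurable
  have hDmeas : ∀ u : ℝ, Measurable (deriv (f u)) := fun u => measurable_deriv (f u)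
  -- a.e. bound for the derivative
  have hDae : ∀ (u : ℝ) (T : Set ℝ), ∀ᵐ s ∂(volume.restrict T), |deriv (f u) s| ≤ Cd := by
    intro u T
    apply ae_restrict_of_ae
    have hne : ∀ᵐ s : ℝ ∂volume, s ≠ u := by
      rw [ae_iff]
      have : {s : ℝ | ¬s ≠ u} = {u} := by ext s; simp
      rw [this]
      exact measure_singleton u
    filter_upwards [hne] with s hs
    exact hCd u s (Ne.symm hs)
  -- a.e.-measurability of the sections s ↦ f u s
  have hfmeasT : ∀ u ∈ Set.Icc a b, ∀ T : Set ℝ, MeasurableSet T → T ⊆ Set.Icc a b →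
      AEStronglyMeasurable (fun s => f u s) (volume.restrict T) := by
    intro u hu T hTm hT
    have hcont : ContinuousOn (fun s => f u s) (T \ {u}) := by
      intro s hs
      have hmap : Set.MapsTo (fun r => ((u : ℝ), r)) (T \ {u})
          ((Set.Icc a b ×ˢ Set.Icc a b) \ {p : ℝ × ℝ | p.1 = p.2}) := by
        intro r hr
        exact hS hu (hT hr.1) (Ne.symm hr.2)
      exact (H2 _ (hS hu (hT hs.1) (Ne.symm hs.2))).comp
        ((continuous_const.prodMk continuous_id).continuousWithinAt) hmap
    have h0 : AEStronglyMeasurable (fun s => f u s) (volume.restrict (T \ {u})) :=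
      hcont.aestronglyMeasurable (hTm.diff (measurableSet_singleton u))
    have hcongr : (T \ {u} : Set ℝ) =ᵐ[volume] T :=
      diff_ae_eq_self.2 (measure_mono_null Set.inter_subset_right (measure_singleton u))
    rwa [Measure.restrict_congr_set hcongr] at h0
  -- continuity of s ↦ f u s on [a, u]
  -- continuity of s ↦ f u s on Icc a b \ {u}
  have hfcontD : ∀ u ∈ Set.Icc a b, ContinuousOn (fun s => f u s) (Set.Icc a b \ {u}) := by
    intro u hu s hs
    have hmap : Set.MapsTo (fun r => ((u : ℝ), r)) (Set.Icc a b \ {u})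
        ((Set.Icc a b ×ˢ Set.Icc a b) \ {p : ℝ × ℝ | p.1 = p.2}) := by
      intro r hr
      exact hS hu hr.1 (Ne.symm hr.2)
    exact (H2 _ (hS hu hs.1 (Ne.symm hs.2))).comp
      ((continuous_const.prodMk continuous_id).continuousWithinAt) hmap
  -- continuity of s ↦ f u s on [a, u]
  have hfcont_sect : ∀ u ∈ Set.Icc a b, ContinuousOn (fun s => f u s) (Set.Icc a u) := by
    intro u hu s hs
    rcases eq_or_ne s u with rfl | hsu
    · have h1 : ContinuousWithinAt (fun r => f s r) (Set.Iio s) s := H3 s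
      have h2 : ContinuousWithinAt (fun r => f s r) ({s} : Set ℝ) s :=
        continuousWithinAt_singleton
      have h3 := h1.union h2
      rw [Set.Iio_union_right] at h3
      exact h3.mono Set.Icc_subset_Iic_self
    · have hslt : s < u := lt_of_le_of_ne hs.2 hsu
      have hmem : Set.Icc a b \ {u} ∈ 𝓝[Set.Icc a u] s := by
        apply Filter.mem_of_superset
          (inter_mem_nhdsWithin (Set.Icc a u) (isOpen_Iio.mem_nhds hslt))
        intro r hr
        exact ⟨⟨hr.1.1, le_trans hr.1.2 hu.2⟩, ne_of_lt hr.2⟩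
      exact ((hfcontD u hu) s ⟨⟨hs.1, le_trans hs.2 hu.2⟩, hsu⟩).mono_of_mem_nhdsWithin hmem
  -- generic integrability of w * deriv (f u) on Ioc a u
  have hIntWD : ∀ u ∈ Set.Icc a b, ∀ w : ℝ → ℝ, Measurable w →
      (∃ Kw : ℝ, 0 ≤ Kw ∧ ∀ s ∈ Set.Icc a b, |w s| ≤ Kw) →
      IntegrableOn (fun s => w s * deriv (f u) s) (Set.Ioc a u) := by
    intro u hu w hw ⟨Kw, hKw0, hKw⟩
    have hsub : Set.Ioc a u ⊆ Set.Icc a b := fun s hs => ⟨le_of_lt hs.1, le_trans hs.2 hu.2⟩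
    apply Integrable.mono' (integrable_const (Kw * Cd))
    · exact ((hw.mul (hDmeas u)).aestronglyMeasurable).restrict
    · filter_upwards [hDae u (Set.Ioc a u), ae_restrict_mem measurableSet_Ioc] with s h1 h2
      rw [Real.norm_eq_abs, abs_mul]
      exact mul_le_mul (hKw s (hsub h2)) h1 (abs_nonneg _) hKw0
  -- generic integrability of w * f u on Ioc a u
  have hIntWf : ∀ u ∈ Set.Icc a b, ∀ w : ℝ → ℝ, Measurable w →
      (∃ Kw : ℝ, 0 ≤ Kw ∧ ∀ s ∈ Set.Icc a b, |w s| ≤ Kw) →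
      IntegrableOn (fun s => w s * f u s) (Set.Ioc a u) := by
    intro u hu w hw ⟨Kw, hKw0, hKw⟩
    have hsub : Set.Ioc a u ⊆ Set.Icc a b := fun s hs => ⟨le_of_lt hs.1, le_trans hs.2 hu.2⟩
    apply Integrable.mono' (integrable_const (Kw * Cb))
    · exact (hw.aestronglyMeasurable.restrict).mul
        (hfmeasT u hu (Set.Ioc a u) measurableSet_Ioc hsub)
    · filter_upwards [ae_restrict_mem measurableSet_Ioc] with s h2
      rw [Real.norm_eq_abs, abs_mul]
      exact mul_le_mul (hKw s (hsub h2)) (hCb u s) (abs_nonneg _) hKw0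
  have hLbd : ∃ Kw : ℝ, 0 ≤ Kw ∧ ∀ s ∈ Set.Icc a b, |L s| ≤ Kw := ⟨K, hK0, hK⟩
  have hcbd : ∀ w : ℝ → ℝ, Continuous w → ∃ Kw : ℝ, 0 ≤ Kw ∧ ∀ s ∈ Set.Icc a b, |w s| ≤ Kw := by
    intro w hw
    obtain ⟨Cw, hCw⟩ := isCompact_Icc.exists_bound_of_continuousOn hw.continuousOn
    refine ⟨Cw, le_trans (norm_nonneg (w a)) (hCw a ⟨le_refl a, hab⟩), ?_⟩
    intro s hs
    rw [← Real.norm_eq_abs]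
    exact hCw s hs
  -- integration by parts
  have hparts : ∀ u ∈ Set.Icc a b, ∀ g g' : ℝ → ℝ, Continuous g → Continuous g' →
      (∀ x, HasDerivAt g (g' x) x) →
      (∫ s in Set.Ioc a u, g s * deriv (f u) s)
        = g u * f u u - g a * f u a - ∫ s in Set.Ioc a u, g' s * f u s := by
    intro u hu g g' hgC hg'C hgd
    have hau : a ≤ u := hu.1
    rcases eq_or_lt_of_le hau with rfl | hau'
    · simp
    · have hcont : ContinuousOn (fun s => g s * f u s) (Set.Icc a u) :=
        hgC.continuousOn.mul (hfcont_sect u hu)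
      have hderiv : ∀ s ∈ Set.Ioo a u, HasDerivAt (fun s => g s * f u s)
          (g' s * f u s + g s * deriv (f u) s) s := by
        intro s hs
        exact (hgd s).mul ((H4 u s (ne_of_gt hs.2)).1.hasDerivAt)
      have hint1 : IntegrableOn (fun s => g' s * f u s) (Set.Ioc a u) :=
        hIntWf u hu g' hg'C.measurable (hcbd g' hg'C)
      have hint2 : IntegrableOn (fun s => g s * deriv (f u) s) (Set.Ioc a u) :=
        hIntWD u hu g hgC.measurable (hcbd g hgC)
      have hint : IntervalIntegrable
          (fun s => g' s * f u s + g s * deriv (f u) s) volume a u := by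
        rw [intervalIntegrable_iff_integrableOn_Ioc_of_le hau]
        exact hint1.add hint2
      have hftc := intervalIntegral.integral_eq_sub_of_hasDerivAt_of_le hau hcont hderiv hint
      rw [intervalIntegral.integral_of_le hau, integral_add hint1 hint2] at hftc
      linarith
  -- "vertical" continuity u ↦ f u s at off-diagonal points
  have hvert : ∀ t s : ℝ, t ∈ Set.Icc a b → s ∈ Set.Icc a b → s ≠ t →
      Filter.Tendsto (fun u => f u s) (𝓝[Set.Icc a b] t) (𝓝 (f t s)) := by
    intro t s ht hs hst
    have h1 : Filter.Tendsto (fun u => ((u : ℝ), s)) (𝓝[Set.Icc a b] t)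
        (𝓝[(Set.Icc a b ×ˢ Set.Icc a b) \ {p : ℝ × ℝ | p.1 = p.2}] (t, s)) := by
      rw [tendsto_nhdsWithin_iff]
      constructor
      · exact ((continuous_id.prodMk continuous_const).tendsto t).mono_left nhdsWithin_le_nhds
      · have hne : ∀ᶠ u in 𝓝[Set.Icc a b] t, u ≠ s := by
          apply Filter.eventually_of_mem (mem_nhdsWithin_of_mem_nhds
            (isOpen_compl_singleton.mem_nhds (Ne.symm hst)))
          exact fun u hu => hu
        filter_upwards [hne, eventually_mem_nhdsWithin] with u h1 h2
        exact hS h2 hs h1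
    exact Filter.Tendsto.comp (H2 (t, s) (hS ht hs (Ne.symm hst))) h1
  -- the auxiliary function N
  set N : ℝ → ℝ := fun u => f u a * L a + ∫ s in Set.Ioc a u, L s * deriv (f u) s with hNdef
  have hMN : ∀ u : ℝ, M u = f u u * L u - N u := by
    intro u
    rw [hM u, hNdef]
    ring
  -- continuity of N on [a, b]
  have hNcont : ∀ t ∈ Set.Icc a b, Filter.Tendsto N (𝓝[Set.Icc a b] t) (𝓝 (N t)) := by
    intro t ht
    rcases eq_or_lt_of_le ht.1 with hat | hat
    · -- t = a
      subst hat
      have hNa : N a = f a a * L a := by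
        rw [hNdef]
        simp
      have key : ∀ u ∈ Set.Icc a b, N u = L a * f u u
          + ∫ s in Set.Ioc a u, (L s - L a) * deriv (f u) s := by
        intro u hu
        have hp := hparts u hu (fun _ => L a) (fun _ => 0) continuous_const continuous_const
          (fun x => hasDerivAt_const x (L a))
        simp only [zero_mul, MeasureTheory.integral_zero, sub_zero] at hp
        have h1 : IntegrableOn (fun s => L s * deriv (f u) s) (Set.Ioc a u) :=
          hIntWD u hu L hLmeas hLbd
        have h2 : IntegrableOn (fun s => L a * deriv (f u) s) (Set.Ioc a u) :=
          hIntWD u hu (fun _ => L a) measurable_const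
            ⟨|L a|, abs_nonneg _, fun s _ => le_refl _⟩
        have hsub : (∫ s in Set.Ioc a u, (L s - L a) * deriv (f u) s)
            = (∫ s in Set.Ioc a u, L s * deriv (f u) s)
              - ∫ s in Set.Ioc a u, L a * deriv (f u) s := by
          simp only [sub_mul]
          exact integral_sub h1 h2
        rw [hNdef, hsub, hp]
        ring
      have h1 : Filter.Tendsto (fun u => L a * f u u) (𝓝[Set.Icc a b] a)
          (𝓝 (L a * f a a)) :=
        ((H3c.tendsto a).mono_left nhdsWithin_le_nhds).const_mul (L a)
      have h2 : Filter.Tendsto (fun u => ∫ s in Set.Ioc a u, (L s - L a) * deriv (f u) s)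
          (𝓝[Set.Icc a b] a) (𝓝 0) := by
        have hb1 : ∀ᶠ u in 𝓝[Set.Icc a b] a,
            ‖∫ s in Set.Ioc a u, (L s - L a) * deriv (f u) s‖
              ≤ (K + |L a|) * Cd * (u - a) := by
          filter_upwards [eventually_mem_nhdsWithin] with u hu
          have hbd : ‖∫ s in Set.Ioc a u, (L s - L a) * deriv (f u) s‖
              ≤ (K + |L a|) * Cd * (volume (Set.Ioc a u)).toReal := by
            apply norm_setIntegral_le_of_norm_le_const_ae measure_Ioc_lt_top
            filter_upwards [hDae u (Set.Ioc a u), ae_restrict_mem measurableSet_Ioc]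
              with s hd hsm
            rw [Real.norm_eq_abs, abs_mul]
            have hLs : |L s| ≤ K := hK s ⟨le_of_lt hsm.1, le_trans hsm.2 hu.2⟩
            have hls : |L s - L a| ≤ K + |L a| := le_trans (abs_sub (L s) (L a)) (by linarith)
            exact mul_le_mul hls hd (abs_nonneg _) (by positivity)
          rw [Real.volume_Ioc, ENNReal.toReal_ofReal (by linarith [hu.1])] at hbd
          exact hbd
        have hb2 : Filter.Tendsto (fun u : ℝ => (K + |L a|) * Cd * (u - a))
            (𝓝[Set.Icc a b] a) (𝓝 0) := by
          have hc : Filter.Tendsto (fun u : ℝ => (K + |L a|) * Cd * (u - a))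
              (𝓝 a) (𝓝 ((K + |L a|) * Cd * (a - a))) :=
            (continuous_const.mul (continuous_id.sub continuous_const)).tendsto a
          simpa using hc.mono_left nhdsWithin_le_nhds
        exact squeeze_zero_norm' hb1 hb2
      have h3 : Filter.Tendsto N (𝓝[Set.Icc a b] a) (𝓝 (L a * f a a + 0)) := by
        apply Filter.Tendsto.congr' _ (h1.add h2)
        filter_upwards [eventually_mem_nhdsWithin] with u hu
        exact (key u hu).symm
      rw [hNa]
      simpa [mul_comm] using h3
    · -- a < t
      have hLint : IntegrableOn L (Set.Ioc a b) := by
        apply Integrable.mono' (integrable_const K) (hLmeas.aestronglyMeasurable.restrict)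
        filter_upwards [ae_restrict_mem measurableSet_Ioc] with s hs
        rw [Real.norm_eq_abs]
        exact hK s ⟨le_of_lt hs.1, hs.2⟩
      rw [Metric.tendsto_nhds]
      intro ε hε
      have hε₁ : (0:ℝ) < ε / (3 * (Cd + 1)) := by positivity
      obtain ⟨g, g', hgC, hg'C, hgd, hgerr⟩ := aux_C1_approx a b hab' L hLint _ hε₁
      obtain ⟨Cg, hCg0, hCg⟩ := hcbd g' hg'C
      have hLg : IntegrableOn (fun s => |L s - g s|) (Set.Ioc a b) := by
        exact (hLint.sub hgC.integrableOn_Ioc).abs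
      set P : ℝ → ℝ := fun u => f u a * L a - g a * f u a + g u * f u u
        - ∫ s in Set.Ioc a b, (Set.Ioc a u).indicator (fun s => g' s * f u s) s with hPdef
      -- uniform comparison between N and P
      have hNP : ∀ u ∈ Set.Icc a b, |N u - P u| ≤ (ε / (3 * (Cd + 1))) * Cd := by
        intro u hu
        have hsubset : Set.Ioc a u ⊆ Set.Ioc a b := Set.Ioc_subset_Ioc_right hu.2
        have hind : (∫ s in Set.Ioc a b, (Set.Ioc a u).indicator (fun s => g' s * f u s) s)
            = ∫ s in Set.Ioc a u, g' s * f u s := by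
          rw [setIntegral_indicator measurableSet_Ioc]
          congr 1
          rw [Set.Ioc_inter_Ioc]
          simp [min_eq_right hu.2]
        have hp := hparts u hu g g' hgC hg'C hgd
        have hintL : IntegrableOn (fun s => L s * deriv (f u) s) (Set.Ioc a u) :=
          hIntWD u hu L hLmeas hLbd
        have hintG : IntegrableOn (fun s => g s * deriv (f u) s) (Set.Ioc a u) :=
          hIntWD u hu g hgC.measurable (hcbd g hgC)
        have hdiff : N u - P u = ∫ s in Set.Ioc a u, (L s - g s) * deriv (f u) s := by
          have hsub2 : (∫ s in Set.Ioc a u, (L s - g s) * deriv (f u) s)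
              = (∫ s in Set.Ioc a u, L s * deriv (f u) s)
                - ∫ s in Set.Ioc a u, g s * deriv (f u) s := by
            simp only [sub_mul]
            exact integral_sub hintL hintG
          have hNu : N u = f u a * L a + ∫ s in Set.Ioc a u, L s * deriv (f u) s := rfl
          have hPu : P u = f u a * L a - g a * f u a + g u * f u u
              - ∫ s in Set.Ioc a b, (Set.Ioc a u).indicator (fun s => g' s * f u s) s := rfl
          rw [hNu, hPu, hind, hsub2, hp]
          ring
        have h1 : |N u - P u| ≤ ∫ s in Set.Ioc a u, |L s - g s| * Cd := by
          rw [hdiff, ← Real.norm_eq_abs]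
          apply MeasureTheory.norm_integral_le_of_norm_le ((hLg.mono_set hsubset).mul_const Cd)
          filter_upwards [hDae u (Set.Ioc a u)] with s hd
          rw [Real.norm_eq_abs, abs_mul]
          exact mul_le_mul_of_nonneg_left hd (abs_nonneg _)
        have h2 : (∫ s in Set.Ioc a u, |L s - g s| * Cd)
            ≤ (∫ s in Set.Ioc a b, |L s - g s|) * Cd := by
          rw [MeasureTheory.integral_mul_const]
          apply mul_le_mul_of_nonneg_right _ hCd0
          exact setIntegral_mono_set hLg (ae_of_all _ fun s => abs_nonneg _)
            (HasSubset.Subset.eventuallyLE hsubset)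
        have h3 : (∫ s in Set.Ioc a b, |L s - g s|) * Cd ≤ (ε / (3 * (Cd + 1))) * Cd :=
          mul_le_mul_of_nonneg_right hgerr hCd0
        linarith
      -- continuity of P at t
      have hPcont : Filter.Tendsto P (𝓝[Set.Icc a b] t) (𝓝 (P t)) := by
        have hA : Filter.Tendsto (fun u => f u a) (𝓝[Set.Icc a b] t) (𝓝 (f t a)) :=
          hvert t a ht ⟨le_refl a, hab⟩ (ne_of_lt hat)
        have hB : Filter.Tendsto g (𝓝[Set.Icc a b] t) (𝓝 (g t)) :=
          (hgC.tendsto t).mono_left nhdsWithin_le_nhds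
        have hC : Filter.Tendsto (fun u => f u u) (𝓝[Set.Icc a b] t) (𝓝 (f t t)) :=
          (H3c.tendsto t).mono_left nhdsWithin_le_nhds
        have hD : Filter.Tendsto
            (fun u => ∫ s in Set.Ioc a b, (Set.Ioc a u).indicator (fun s => g' s * f u s) s)
            (𝓝[Set.Icc a b] t)
            (𝓝 (∫ s in Set.Ioc a b, (Set.Ioc a t).indicator (fun s => g' s * f t s) s)) := by
          apply MeasureTheory.tendsto_integral_filter_of_dominated_convergence (fun _ => Cg * Cb)
          · filter_upwards [eventually_mem_nhdsWithin] with u hu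
            exact ((hg'C.measurable.aestronglyMeasurable.restrict).mul
              (hfmeasT u hu (Set.Ioc a b) measurableSet_Ioc Set.Ioc_subset_Icc_self)).indicator
              measurableSet_Ioc
          · apply Filter.Eventually.of_forall
            intro u
            filter_upwards [ae_restrict_mem measurableSet_Ioc] with s hs
            by_cases hsu : s ∈ Set.Ioc a u
            · rw [Set.indicator_of_mem hsu, Real.norm_eq_abs, abs_mul]
              refine mul_le_mul ?_ (hCb u s) (abs_nonneg _) hCg0
              rw [← Real.norm_eq_abs]
              exact hCg s (Set.Ioc_subset_Icc_self hs)
            · rw [Set.indicator_of_notMem hsu]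
              simp only [norm_zero]
              positivity
          · exact integrableOn_const measure_Ioc_lt_top.ne
          · have hne : ∀ᵐ s : ℝ ∂volume.restrict (Set.Ioc a b), s ≠ t := by
              apply ae_restrict_of_ae
              rw [ae_iff]
              have hset : {s : ℝ | ¬s ≠ t} = {t} := by ext s; simp
              rw [hset]
              exact measure_singleton t
            filter_upwards [hne, ae_restrict_mem measurableSet_Ioc] with s hst hs
            rcases lt_or_gt_of_ne hst with hlt | hgt
            · have hev : ∀ᶠ u in 𝓝[Set.Icc a b] t,
                  (Set.Ioc a u).indicator (fun s => g' s * f u s) s = g' s * f u s := by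
                have hIoi : Set.Ioi s ∈ 𝓝[Set.Icc a b] t :=
                  mem_nhdsWithin_of_mem_nhds (isOpen_Ioi.mem_nhds hlt)
                filter_upwards [hIoi] with u hu
                exact Set.indicator_of_mem (show s ∈ Set.Ioc a u from ⟨hs.1, le_of_lt hu⟩) _
              have hmain : Filter.Tendsto (fun u => g' s * f u s) (𝓝[Set.Icc a b] t)
                  (𝓝 (g' s * f t s)) :=
                (hvert t s ht (Set.Ioc_subset_Icc_self hs) (ne_of_lt hlt)).const_mul (g' s)
              rw [Set.indicator_of_mem (show s ∈ Set.Ioc a t from ⟨hs.1, le_of_lt hlt⟩)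
                (fun s => g' s * f t s)]
              exact hmain.congr' (hev.mono fun u h => h.symm)
            · have hev : ∀ᶠ u in 𝓝[Set.Icc a b] t,
                  (Set.Ioc a u).indicator (fun s => g' s * f u s) s = 0 := by
                have hIio : Set.Iio s ∈ 𝓝[Set.Icc a b] t :=
                  mem_nhdsWithin_of_mem_nhds (isOpen_Iio.mem_nhds hgt)
                filter_upwards [hIio] with u hu
                exact Set.indicator_of_notMem
                  (show s ∉ Set.Ioc a u from fun hc => absurd hc.2 (not_le.2 hu)) _
              rw [Set.indicator_of_notMem
                (show s ∉ Set.Ioc a t from fun hc => absurd hc.2 (not_le.2 hgt))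
                (fun s => g' s * f t s)]
              exact tendsto_const_nhds.congr' (hev.mono fun u h => h.symm)
        rw [hPdef]
        exact (((hA.mul_const (L a)).sub (hA.const_mul (g a))).add (hB.mul hC)).sub hD
      -- conclude
      have hε3 : (0:ℝ) < ε / 3 := by linarith
      have hPt := (Metric.tendsto_nhds.1 hPcont) (ε/3) hε3
      have hCd1 : (Cd + 1) ≠ 0 := ne_of_gt (by linarith)
      have he1 : (ε / (3 * (Cd + 1))) * (Cd + 1) = ε / 3 := by
        rw [div_mul_eq_mul_div]
        exact mul_div_mul_right ε 3 hCd1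
      have hCdle : (ε / (3 * (Cd + 1))) * Cd ≤ ε / 3 := by
        calc (ε / (3 * (Cd + 1))) * Cd ≤ (ε / (3 * (Cd + 1))) * (Cd + 1) :=
              mul_le_mul_of_nonneg_left (by linarith) (le_of_lt hε₁)
          _ = ε / 3 := he1
      filter_upwards [eventually_mem_nhdsWithin, hPt] with u hu hP
      have d1 : |N u - P u| ≤ (ε / (3 * (Cd + 1))) * Cd := hNP u hu
      have d2 : |P t - N t| ≤ (ε / (3 * (Cd + 1))) * Cd := by
        rw [abs_sub_comm]
        exact hNP t ht
      rw [Real.dist_eq] at hP ⊢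
      have t1 := abs_sub_le (N u) (P u) (N t)
      have t2 := abs_sub_le (P u) (P t) (N t)
      linarith
  constructor
  · -- Part 1: left limits and jumps
    intro t ht
    have htIcc : t ∈ Set.Icc a b := ⟨le_of_lt ht.1, ht.2⟩
    have hIio : 𝓝[Set.Iio t] t = 𝓝[Set.Ioo a t] t :=
      (nhdsWithin_Ioo_eq_nhdsLT ht.1).symm
    have hle : 𝓝[Set.Iio t] t ≤ 𝓝[Set.Icc a b] t := by
      rw [hIio]
      exact nhdsWithin_mono t (fun s hs => ⟨le_of_lt hs.1, le_trans (le_of_lt hs.2) ht.2⟩)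
    have h1 : Filter.Tendsto N (𝓝[Set.Iio t] t) (𝓝 (N t)) :=
      (hNcont t htIcc).mono_left hle
    have h2 : Filter.Tendsto (fun u => f u u * L u) (𝓝[Set.Iio t] t)
        (𝓝 (f t t * Lminus t)) :=
      (((H3c.tendsto t).mono_left nhdsWithin_le_nhds).mul (hLl t))
    have h3 : Filter.Tendsto M (𝓝[Set.Iio t] t) (𝓝 (f t t * Lminus t - N t)) :=
      (h2.sub h1).congr (fun u => (hMN u).symm)
    have hval : M t - f t t * (L t - Lminus t) = f t t * Lminus t - N t := by
      rw [hMN t]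
      ring
    rw [hval]
    exact h3
  · -- Part 2: continuity when the diagonal vanishes
    intro hdiag t ht
    have hN := hNcont t ht
    have h0 : Filter.Tendsto (fun u => f u u * L u) (𝓝[Set.Icc a b] t) (𝓝 0) := by
      have hb1 : ∀ᶠ u in 𝓝[Set.Icc a b] t, ‖f u u * L u‖ ≤ |f u u| * K := by
        filter_upwards [eventually_mem_nhdsWithin] with u hu
        rw [Real.norm_eq_abs, abs_mul]
        exact mul_le_mul_of_nonneg_left (hK u hu) (abs_nonneg _)
      have hb2 : Filter.Tendsto (fun u => |f u u| * K) (𝓝[Set.Icc a b] t) (𝓝 0) := by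
        have hc : Filter.Tendsto (fun u => |f u u| * K) (𝓝[Set.Icc a b] t)
            (𝓝 (|f t t| * K)) :=
          (((H3c.tendsto t).mono_left nhdsWithin_le_nhds).abs).mul_const K
        simpa [hdiag t ht] using hc
      exact squeeze_zero_norm' hb1 hb2
    have h3 : Filter.Tendsto M (𝓝[Set.Icc a b] t) (𝓝 (0 - N t)) :=
      (h0.sub hN).congr (fun u => (hMN u).symm)
    have hval : M t = 0 - N t := by
      rw [hMN t, hdiag t ht]
      ring
    unfold ContinuousWithinAt
    rw [hval]
    exact h3
end

section
/- For 0 < d < 1/2 and t > 0, d/dt of the map t ↦ ∫_ℝ (I₋^d χ_{[0,t]})(s) h(s) ds equals (I₊^d h)(t), for every Schwartz function h on ℝ. -/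
open MeasureTheory Set

variable {d : ℝ}



/-- The kernel `v ↦ (v)₊^(d-1)` is interval integrable. -/
lemma frac_aux_intble (hd0 : 0 < d) (hd : d < 1/2) (a b : ℝ) :
    IntervalIntegrable (fun v : ℝ => max v 0 ^ (d - 1)) volume a b := by
  apply (intervalIntegral.intervalIntegrable_rpow' (by linarith : (-1:ℝ) < d - 1)
    (a := a) (b := b)).mono_fun
  · exact ((measurable_id.max measurable_const).pow_const _).aestronglyMeasurable
  · filter_upwards with v
    simp only [Real.norm_eq_abs]
    rcases le_or_gt v 0 with hv | hv
    · rw [max_eq_right hv, Real.zero_rpow (by linarith : d - 1 ≠ 0)]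
      simp
    · rw [max_eq_left hv.le]

lemma frac_integral_maxpow (hd0 : 0 < d) (hd : d < 1/2) {a b : ℝ} (hab : a ≤ b) :
    ∫ v in a..b, max v 0 ^ (d - 1) = (max b 0 ^ d - max a 0 ^ d) / d := by
  have hne : d - 1 ≠ 0 := by linarith
  have key0 : ∀ a b : ℝ, a ≤ b → b ≤ 0 → ∫ v in a..b, max v 0 ^ (d - 1) = 0 := by
    intro a b hab hb
    rw [intervalIntegral.integral_congr (g := fun _ => (0:ℝ)) ?_]
    · simp
    · intro v hv
      rw [uIcc_of_le hab] at hv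
      have : v ≤ 0 := hv.2.trans hb
      simp only [max_eq_right this, Real.zero_rpow hne]
  have key1 : ∀ a b : ℝ, 0 ≤ a → a ≤ b → ∫ v in a..b, max v 0 ^ (d - 1)
      = (b ^ d - a ^ d) / d := by
    intro a b ha hab
    rw [intervalIntegral.integral_congr (g := fun v => v ^ (d - 1)) ?_]
    · rw [integral_rpow (Or.inl (by linarith : (-1:ℝ) < d - 1))]
      norm_num
    · intro v hv
      rw [uIcc_of_le hab] at hv
      simp only [max_eq_left (ha.trans hv.1)]
  rcases le_or_gt b 0 with hb | hb
  · rw [key0 a b hab hb, max_eq_right hb, max_eq_right (hab.trans hb),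
      Real.zero_rpow (ne_of_gt hd0)]
    simp
  · rcases le_or_gt 0 a with ha | ha
    · rw [key1 a b ha hab, max_eq_left hb.le, max_eq_left ha]
    · rw [← intervalIntegral.integral_add_adjacent_intervals
        (frac_aux_intble hd0 hd a 0) (frac_aux_intble hd0 hd 0 b),
        key0 a 0 ha.le le_rfl, key1 0 b le_rfl hb.le,
        max_eq_left hb.le, max_eq_right ha.le, Real.zero_rpow (ne_of_gt hd0)]
      ring

lemma frac_rpow_subadd (hd0 : 0 < d) (hd : d < 1/2) {x y : ℝ} (hx : 0 ≤ x) (hy : 0 ≤ y) :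
    (x + y) ^ d ≤ x ^ d + y ^ d := by
  lift x to NNReal using hx
  lift y to NNReal using hy
  exact_mod_cast NNReal.rpow_add_le_add_rpow x y hd0.le (by linarith)

lemma frac_psi_nonneg (hd0 : 0 < d) {τ s : ℝ} (hτ : 0 ≤ τ) :
    0 ≤ max (τ - s) 0 ^ d - max (-s) 0 ^ d := by
  have : max (-s) 0 ≤ max (τ - s) 0 := by
    apply max_le_max _ le_rfl
    linarith
  have := Real.rpow_le_rpow (le_max_right _ _) this hd0.le
  linarith

lemma frac_psi_le (hd0 : 0 < d) (hd : d < 1/2) {τ s : ℝ} (hτ : 0 ≤ τ) :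
    max (τ - s) 0 ^ d - max (-s) 0 ^ d ≤ τ ^ d := by
  have h1 : max (τ - s) 0 ≤ τ + max (-s) 0 := by
    rcases le_total (τ - s) 0 with hc | hc
    · simp [max_eq_right hc]; positivity
    · rw [max_eq_left hc]
      rcases le_total (-s) 0 with hc2 | hc2
      · rw [max_eq_right hc2]; linarith
      · rw [max_eq_left hc2]; linarith
  have h2 : max (τ - s) 0 ^ d ≤ (τ + max (-s) 0) ^ d :=
    Real.rpow_le_rpow (le_max_right _ _) h1 hd0.le
  have h3 := frac_rpow_subadd hd0 hd hτ (le_max_right (-s) 0)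
  linarith


/-- Continuity of `u ↦ ∫ s, (u-s)₊^(d-1) h(s)` at nonneg points. -/
lemma frac_g_cont (hd0 : 0 < d) (hd : d < 1/2) (h : SchwartzMap ℝ ℝ) {u₀ : ℝ}
    (hu₀ : 0 ≤ u₀) :
    ContinuousAt (fun u : ℝ => ∫ s : ℝ, max (u - s) 0 ^ (d - 1) * h s) u₀ := by
  have hrw : ∀ u : ℝ, ∫ s : ℝ, max (u - s) 0 ^ (d - 1) * h s
      = ∫ v : ℝ, max v 0 ^ (d - 1) * h (u - v) := by
    intro u
    rw [← integral_sub_left_eq_self (fun s : ℝ => max (u - s) 0 ^ (d - 1) * h s) volume u]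
    congr 1
    ext v
    simp [sub_sub_cancel]
  simp only [hrw]
  -- decay constants
  obtain ⟨C₀, hC₀pos, hC₀⟩ := h.decay 0 0
  obtain ⟨C₂, hC₂pos, hC₂⟩ := h.decay 2 0
  set C : ℝ := C₀ + C₂ with hC
  have hCpos : 0 < C := by positivity
  have hhb : ∀ x : ℝ, |h x| * (1 + x ^ 2) ≤ C := by
    intro x
    have e0 := hC₀ x
    have e2 := hC₂ x
    simp only [pow_zero, one_mul, norm_iteratedFDeriv_zero, Real.norm_eq_abs] at e0 e2
    have : |x| ^ 2 = x ^ 2 := sq_abs x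
    nlinarith [abs_nonneg (h x)]
  set B : ℝ → ℝ := fun v => C * (max v 0 ^ (d - 1)) * (1 + max (v - u₀ - 1) 0 ^ 2)⁻¹ with hB
  apply continuousAt_of_dominated (bound := B)
  · filter_upwards with u
    exact (((measurable_id.max measurable_const).pow_const _).mul
      (h.continuous.measurable.comp (measurable_const.sub measurable_id))).aestronglyMeasurable
  · filter_upwards [Metric.ball_mem_nhds u₀ one_pos] with u hu
    rw [Metric.mem_ball, Real.dist_eq] at hu
    filter_upwards with v
    have h1 : (0:ℝ) ≤ max v 0 ^ (d - 1) := Real.rpow_nonneg (le_max_right _ _) _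
    have h2 : 1 + max (v - u₀ - 1) 0 ^ 2 ≤ 1 + (u - v) ^ 2 := by
      rcases le_or_gt v (u₀ + 1) with hv | hv
      · have : max (v - u₀ - 1) 0 = 0 := max_eq_right (by linarith)
        rw [this]
        nlinarith
      · have hm : max (v - u₀ - 1) 0 = v - u₀ - 1 := max_eq_left (by linarith)
        rw [hm]
        have habs := abs_lt.mp hu
        nlinarith
    have hub : |h (u - v)| ≤ C / (1 + (u - v) ^ 2) := by
      rw [le_div_iff₀ (by positivity)]
      exact hhb (u - v)
    calc ‖max v 0 ^ (d - 1) * h (u - v)‖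
        = max v 0 ^ (d - 1) * |h (u - v)| := by
          rw [norm_mul, Real.norm_eq_abs, Real.norm_eq_abs, abs_of_nonneg h1]
      _ ≤ max v 0 ^ (d - 1) * (C / (1 + (u - v) ^ 2)) := by
          exact mul_le_mul_of_nonneg_left hub h1
      _ ≤ max v 0 ^ (d - 1) * (C / (1 + max (v - u₀ - 1) 0 ^ 2)) := by
          apply mul_le_mul_of_nonneg_left _ h1
          apply div_le_div_of_nonneg_left hCpos.le (by positivity) h2
      _ = B v := by rw [hB]; ring
  · -- integrability of the bound
    have hBmeas : Measurable B := by
      apply (measurable_const.mul ((measurable_id.max measurable_const).pow_const _)).mul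
      exact (measurable_const.add
        (((measurable_id.sub measurable_const).sub measurable_const).max measurable_const
          |>.pow measurable_const)).inv
    have hBnn : ∀ v, 0 ≤ B v := by
      intro v
      have h1 : (0:ℝ) ≤ max v 0 ^ (d - 1) := Real.rpow_nonneg (le_max_right _ _) _
      have : (0:ℝ) < 1 + max (v - u₀ - 1) 0 ^ 2 := by positivity
      positivity
    have hI1 : IntegrableOn B (Iic 0) := by
      apply (integrable_zero _ _ _).integrableOn.congr_fun _ measurableSet_Iic
      intro v hv
      simp only [mem_Iic] at hv
      rw [hB]
      simp [max_eq_right hv, Real.zero_rpow (by linarith : d - 1 ≠ 0)]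
    have hI2 : IntegrableOn B (Ioc 0 (u₀ + 2)) := by
      have base : IntegrableOn (fun v : ℝ => v ^ (d - 1)) (Ioc 0 (u₀ + 2)) :=
        (intervalIntegral.intervalIntegrable_rpow'
          (by linarith : (-1:ℝ) < d - 1) (a := 0) (b := u₀ + 2)).1
      apply (base.const_mul C).mono (hBmeas.aestronglyMeasurable.restrict)
      rw [ae_restrict_iff' measurableSet_Ioc]
      filter_upwards with v hv
      have hv0 : 0 < v := hv.1
      have hxp : (0:ℝ) ≤ v ^ (d - 1) := Real.rpow_nonneg hv0.le _
      rw [Real.norm_eq_abs, abs_of_nonneg (hBnn v), Real.norm_eq_abs, abs_of_nonneg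
        (by positivity : (0:ℝ) ≤ C * v ^ (d - 1))]
      rw [hB]
      simp only [max_eq_left hv0.le]
      have h2 : (1 + max (v - u₀ - 1) 0 ^ 2)⁻¹ ≤ 1 := by
        rw [inv_le_one_iff₀]
        right
        nlinarith [sq_nonneg (max (v - u₀ - 1) 0)]
      calc C * v ^ (d - 1) * (1 + max (v - u₀ - 1) 0 ^ 2)⁻¹
          ≤ C * v ^ (d - 1) * 1 := by
            apply mul_le_mul_of_nonneg_left h2 (by positivity)
        _ = C * v ^ (d - 1) := by ring
    have hI3 : IntegrableOn B (Ioi (u₀ + 2)) := by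
      have base : IntegrableOn (fun v : ℝ => v ^ (-2:ℝ)) (Ioi (u₀ + 2)) :=
        integrableOn_Ioi_rpow_of_lt (by norm_num) (by linarith)
      apply (base.const_mul (C * (u₀ + 2) ^ 2)).mono (hBmeas.aestronglyMeasurable.restrict)
      rw [ae_restrict_iff' measurableSet_Ioi]
      filter_upwards with v hv
      simp only [mem_Ioi] at hv
      have hv1 : (1:ℝ) ≤ v := by linarith
      have hv0 : (0:ℝ) < v := by linarith
      have hm : max (v - u₀ - 1) 0 = v - u₀ - 1 := max_eq_left (by linarith)
      have hrp : v ^ (-2:ℝ) = (v ^ 2)⁻¹ := by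
        rw [show (-2:ℝ) = -(2:ℕ) by norm_num, Real.rpow_neg hv0.le, Real.rpow_natCast]
      rw [Real.norm_eq_abs, abs_of_nonneg (hBnn v), Real.norm_eq_abs, hrp,
        abs_of_nonneg (by positivity : (0:ℝ) ≤ C * (u₀ + 2) ^ 2 * (v ^ 2)⁻¹)]
      have hvd : v ^ (d - 1) ≤ 1 :=
        Real.rpow_le_one_of_one_le_of_nonpos hv1 (by linarith)
      have hstep1 : B v ≤ C * (1 + (v - u₀ - 1) ^ 2)⁻¹ := by
        rw [hB]
        simp only [max_eq_left hv0.le, hm]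
        calc C * v ^ (d - 1) * (1 + (v - u₀ - 1) ^ 2)⁻¹
            ≤ C * 1 * (1 + (v - u₀ - 1) ^ 2)⁻¹ := by
              apply mul_le_mul_of_nonneg_right _ (by positivity)
              exact mul_le_mul_of_nonneg_left hvd hCpos.le
          _ = C * (1 + (v - u₀ - 1) ^ 2)⁻¹ := by ring
      have hkey : (1 + (v - u₀ - 1) ^ 2)⁻¹ ≤ (u₀ + 2) ^ 2 * (v ^ 2)⁻¹ := by
        rw [inv_le_iff_one_le_mul₀ (by nlinarith)]
        have hge : v / (u₀ + 2) ≤ v - u₀ - 1 := by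
          rw [div_le_iff₀ (by linarith)]
          nlinarith
        have hvpos : 0 < v / (u₀ + 2) := by positivity
        have : (v / (u₀ + 2)) ^ 2 ≤ (v - u₀ - 1) ^ 2 := by
          apply sq_le_sq' _ hge
          nlinarith
        rw [div_pow] at this
        have h2 : v ^ 2 / (u₀ + 2) ^ 2 ≤ 1 + (v - u₀ - 1) ^ 2 := by linarith
        rw [div_le_iff₀ (by positivity)] at h2
        calc (1:ℝ) = (u₀ + 2) ^ 2 * (v ^ 2)⁻¹ * (v ^ 2 / (u₀ + 2) ^ 2) := by
              field_simp
          _ ≤ (u₀ + 2) ^ 2 * (v ^ 2)⁻¹ * (1 + (v - u₀ - 1) ^ 2) := by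
              apply mul_le_mul_of_nonneg_left _ (by positivity)
              rw [div_le_iff₀ (by positivity)]
              exact h2
      calc B v ≤ C * (1 + (v - u₀ - 1) ^ 2)⁻¹ := hstep1
        _ ≤ C * ((u₀ + 2) ^ 2 * (v ^ 2)⁻¹) := mul_le_mul_of_nonneg_left hkey hCpos.le
        _ = C * (u₀ + 2) ^ 2 * (v ^ 2)⁻¹ := by ring
    have : IntegrableOn B (univ : Set ℝ) := by
      have e1 : (Iic 0 ∪ Ioc 0 (u₀ + 2)) = Iic (u₀ + 2) :=
        Iic_union_Ioc_eq_Iic (by linarith)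
      have e2 : (Iic (u₀ + 2) ∪ Ioi (u₀ + 2)) = (univ : Set ℝ) := Iic_union_Ioi
      rw [← e2, ← e1]
      exact (hI1.union hI2).union hI3
    rwa [integrableOn_univ] at this
  · filter_upwards with v
    exact (continuous_const.mul
      (h.continuous.comp (continuous_id.sub continuous_const))).continuousAt

/-- The identity `(τ-s)₊^d - (-s)₊^d = d ∫_{(0,τ]} (u-s)₊^(d-1) du`. -/
lemma frac_key (hd0 : 0 < d) (hd : d < 1/2) {τ : ℝ} (hτ : 0 ≤ τ) (s : ℝ) :
    ∫ u in Ioc (0:ℝ) τ, max (u - s) 0 ^ (d - 1)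
      = (max (τ - s) 0 ^ d - max (-s) 0 ^ d) / d := by
  rw [← intervalIntegral.integral_of_le hτ,
    intervalIntegral.integral_comp_sub_right (fun v => max v 0 ^ (d - 1)) s,
    frac_integral_maxpow hd0 hd (by linarith : 0 - s ≤ τ - s), zero_sub]

lemma frac_fubini_int (hd0 : 0 < d) (hd : d < 1/2) (h : SchwartzMap ℝ ℝ) {τ : ℝ}
    (hτ : 0 < τ) :
    Integrable (Function.uncurry fun (s u : ℝ) => max (u - s) 0 ^ (d - 1) * h s)
      (volume.prod (volume.restrict (Ioc 0 τ))) := by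
  have hmeas : AEStronglyMeasurable
      (Function.uncurry fun (s u : ℝ) => max (u - s) 0 ^ (d - 1) * h s)
      (volume.prod (volume.restrict (Ioc 0 τ))) := by
    apply Measurable.aestronglyMeasurable
    exact (((measurable_snd.sub measurable_fst).max measurable_const).pow_const _).mul
      (h.continuous.measurable.comp measurable_fst)
  rw [integrable_prod_iff hmeas]
  constructor
  · filter_upwards with s
    have := (((frac_aux_intble hd0 hd (0 - s) (τ - s)).comp_sub_right s).1).mul_const (h s)
    simpa using this
  · have hnorm : ∀ s : ℝ, (∫ u in Ioc (0:ℝ) τ, ‖max (u - s) 0 ^ (d - 1) * h s‖)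
        = (max (τ - s) 0 ^ d - max (-s) 0 ^ d) / d * |h s| := by
      intro s
      have he : ∀ u : ℝ, ‖max (u - s) 0 ^ (d - 1) * h s‖
          = max (u - s) 0 ^ (d - 1) * |h s| := by
        intro u
        rw [norm_mul, Real.norm_eq_abs, Real.norm_eq_abs,
          abs_of_nonneg (Real.rpow_nonneg (le_max_right _ _) _)]
      simp only [he]
      rw [integral_mul_const, frac_key hd0 hd hτ.le s]
    apply Integrable.mono (h.integrable.norm.const_mul (τ ^ d / d))
    · exact hmeas.norm.integral_prod_right'
    · filter_upwards with s
      simp only [Function.uncurry_apply_pair]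
      rw [hnorm s]
      have h1 : 0 ≤ (max (τ - s) 0 ^ d - max (-s) 0 ^ d) / d :=
        div_nonneg (frac_psi_nonneg hd0 hτ.le) hd0.le
      have h2 : (max (τ - s) 0 ^ d - max (-s) 0 ^ d) / d * |h s| ≤ τ ^ d / d * |h s| := by
        gcongr
        exact frac_psi_le hd0 hd hτ.le
      calc ‖(max (τ - s) 0 ^ d - max (-s) 0 ^ d) / d * |h s|‖
          = (max (τ - s) 0 ^ d - max (-s) 0 ^ d) / d * |h s| :=
            Real.norm_of_nonneg (mul_nonneg h1 (abs_nonneg _))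
        _ ≤ τ ^ d / d * |h s| := h2
        _ = τ ^ d / d * ‖h s‖ := by rw [Real.norm_eq_abs]
        _ ≤ ‖τ ^ d / d * ‖h s‖‖ := le_abs_self _

/-- For `τ > 0`, the S-transform integral equals the iterated form. -/
lemma frac_F_eq (hd0 : 0 < d) (hd : d < 1/2) (h : SchwartzMap ℝ ℝ) {τ : ℝ} (hτ : 0 < τ) :
    ∫ s : ℝ, ((1 / Real.Gamma (d + 1)) * (max (τ - s) 0 ^ d - max (-s) 0 ^ d)) * h s
      = (1 / Real.Gamma d) *
        ∫ u in (0:ℝ)..τ, ∫ s : ℝ, max (u - s) 0 ^ (d - 1) * h s := by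
  have hd' : d ≠ 0 := ne_of_gt hd0
  have hstep : ∀ s : ℝ, (max (τ - s) 0 ^ d - max (-s) 0 ^ d) * h s
      = d * ∫ u in Ioc (0:ℝ) τ, max (u - s) 0 ^ (d - 1) * h s := by
    intro s
    rw [integral_mul_const, frac_key hd0 hd hτ.le s]
    field_simp
  calc ∫ s : ℝ, ((1 / Real.Gamma (d + 1)) * (max (τ - s) 0 ^ d - max (-s) 0 ^ d)) * h s
      = (1 / Real.Gamma (d + 1)) *
        ∫ s : ℝ, (max (τ - s) 0 ^ d - max (-s) 0 ^ d) * h s := by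
        simp only [mul_assoc]
        rw [integral_const_mul]
    _ = (1 / Real.Gamma (d + 1)) * ∫ s : ℝ,
          d * ∫ u in Ioc (0:ℝ) τ, max (u - s) 0 ^ (d - 1) * h s := by
        congr 1
        exact integral_congr_ae (Filter.Eventually.of_forall hstep)
    _ = (1 / Real.Gamma (d + 1)) * (d * ∫ s : ℝ,
          ∫ u in Ioc (0:ℝ) τ, max (u - s) 0 ^ (d - 1) * h s) := by
        rw [integral_const_mul]
    _ = (1 / Real.Gamma (d + 1)) * (d *
          ∫ u in Ioc (0:ℝ) τ, ∫ s : ℝ, max (u - s) 0 ^ (d - 1) * h s) := by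
        rw [integral_integral_swap (frac_fubini_int hd0 hd h hτ)]
    _ = (1 / Real.Gamma d) *
          ∫ u in (0:ℝ)..τ, ∫ s : ℝ, max (u - s) 0 ^ (d - 1) * h s := by
        rw [intervalIntegral.integral_of_le hτ.le]
        have hg : Real.Gamma (d + 1) = d * Real.Gamma d := Real.Gamma_add_one hd'
        have hgd : Real.Gamma d ≠ 0 := ne_of_gt (Real.Gamma_pos_of_pos hd0)
        rw [hg]
        field_simp

/-- Scalar core of Theorem 6.1: for a Schwartz function `h`, the map
`t ↦ ∫ (I₋^d χ_{[0,t]})(s) h(s) ds` is differentiable at `t > 0` with derivative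
`(I₊^d h)(t) = (1/Γ(d)) ∫_{-∞}^t h(u)(t-u)^{d-1} du`, where
`(I₋^d χ_{[0,t]})(s) = (1/Γ(d+1))((t-s)₊^d - (-s)₊^d)`. -/
theorem deriv_S_transform_fractional
    (d : ℝ) (hd0 : 0 < d) (hd : d < 1/2) (h : SchwartzMap ℝ ℝ) (t : ℝ) (ht : 0 < t) :
    HasDerivAt
      (fun τ : ℝ => ∫ s : ℝ,
        ((1 / Real.Gamma (d + 1)) * ((max (τ - s) 0) ^ d - (max (-s) 0) ^ d)) * h s)
      ((1 / Real.Gamma d) * ∫ u in Set.Iic t, h u * (t - u) ^ (d - 1)) t := by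
  set g : ℝ → ℝ := fun u => ∫ s : ℝ, max (u - s) 0 ^ (d - 1) * h s with hgdef
  have hcontOn : ContinuousOn g (Ici 0) := fun x hx =>
    (frac_g_cont hd0 hd h hx).continuousWithinAt
  have hderiv : HasDerivAt (fun τ : ℝ => ∫ u in (0:ℝ)..τ, g u) (g t) t := by
    apply intervalIntegral.integral_hasDerivAt_right
    · apply ContinuousOn.intervalIntegrable
      intro x hx
      rw [uIcc_of_le ht.le] at hx
      exact (frac_g_cont hd0 hd h hx.1).continuousWithinAt
    · exact ⟨Ici 0, Ici_mem_nhds ht, hcontOn.aestronglyMeasurable measurableSet_Ici⟩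
    · exact frac_g_cont hd0 hd h ht.le
  have hgt : g t = ∫ u in Iic t, h u * (t - u) ^ (d - 1) := by
    have hzero : ∀ s : ℝ, s ∉ Iic t → max (t - s) 0 ^ (d - 1) * h s = 0 := by
      intro s hs
      simp only [mem_Iic, not_le] at hs
      rw [max_eq_right (by linarith), Real.zero_rpow (by linarith : d - 1 ≠ 0), zero_mul]
    have h1 : ∫ s in Iic t, max (t - s) 0 ^ (d - 1) * h s
        = ∫ s : ℝ, max (t - s) 0 ^ (d - 1) * h s :=
      setIntegral_eq_integral_of_forall_compl_eq_zero hzero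
    rw [hgdef]
    simp only
    rw [← h1]
    apply setIntegral_congr_fun measurableSet_Iic
    intro s hs
    dsimp only
    rw [max_eq_left (sub_nonneg.mpr (mem_Iic.mp hs)), mul_comm]
  have hmain : HasDerivAt (fun τ : ℝ => (1 / Real.Gamma d) * ∫ u in (0:ℝ)..τ, g u)
      ((1 / Real.Gamma d) * ∫ u in Iic t, h u * (t - u) ^ (d - 1)) t := by
    rw [← hgt]
    exact hderiv.const_mul _
  apply hmain.congr_of_eventuallyEq
  filter_upwards [Ioi_mem_nhds ht] with τ hτ
  exact frac_F_eq hd0 hd h hτ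
end
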